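/- Let C and D be K-linear abelian categories, F : C → D a K-linear functor, L/K finite Galois with group G, and F_L : C_L → D_L the base-changed functor. Let M ∈ C_L with M ≅ ᵍM for all g ∈ G and End_{C_L}(M) ≅ L, and suppose End_{D_L}(F_L(M)) ≅ L. Then M descends to C if and only if F_L(M) descends to D. -/

import Mathlib

/-!
Because `End M = L`, `End (Φ M) = L` and `M ≅ ᵍM` for every `g`, the functor `Φ` is
bijective on `Hom(M, ᵍM)`: conjugating by isomorphisms reduces this to `End M`, where `Φ` is
the identity on scalars. So `Φ` identifies isomorphisms `M ≅ ᵍM` with isomorphisms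
`Φ M ≅ ᵍ(Φ M)`, and, `Φ` commuting with the twists, the cocycle conditions correspond. Hence
`M` carries a descent datum iff `Φ M` does, and effectivity of descent on both sides concludes.
-/

namespace CategoryTheory

variable {C D : Type*} [Category C] [Category D]

theorem Functor.map_bijective_of_iso (F : C ⥤ D) {X Y X₁ Y₁ : C}
    (α : X ≅ X₁) (β : Y ≅ Y₁)
    (h : Function.Bijective (F.map : (X ⟶ Y) → (F.obj X ⟶ F.obj Y))) :
    Function.Bijective (F.map : (X₁ ⟶ Y₁) → (F.obj X₁ ⟶ F.obj Y₁)) := by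
  have hconj : (F.map : (X₁ ⟶ Y₁) → (F.obj X₁ ⟶ F.obj Y₁)) =
      Iso.homCongr (F.mapIso α) (F.mapIso β) ∘ F.map ∘ (Iso.homCongr α β).symm := by
    funext f
    rw [Function.comp_apply, Function.comp_apply, ← F.map_homCongr, Equiv.apply_symm_apply]
  rw [hconj]
  exact (Equiv.bijective _).comp (h.comp (Equiv.bijective _))

theorem Functor.map_bijective_of_smul_id_surjective {R : Type*} [Semiring R]
    [Preadditive C] [Preadditive D] [CategoryTheory.Linear R C] [CategoryTheory.Linear R D]
    (F : C ⥤ D) [F.Additive] [F.Linear R] {X : C}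
    (hX : Function.Surjective (fun a : R => a • 𝟙 X))
    (hFX : Function.Bijective (fun a : R => a • 𝟙 (F.obj X))) :
    Function.Bijective (F.map : (X ⟶ X) → (F.obj X ⟶ F.obj X)) := by
  have hcomp : F.map ∘ (fun a : R => a • 𝟙 X) = fun a : R => a • 𝟙 (F.obj X) := by
    funext a
    simp only [Function.comp_apply, F.map_smul, F.map_id]
  rw [← hcomp] at hFX
  exact ⟨hFX.1.of_comp_right hX, hFX.2.of_comp⟩

theorem Functor.exists_iso_map_hom_eq (F : C ⥤ D) {X Y : C}
    (hX : Function.Bijective (F.map : (X ⟶ X) → (F.obj X ⟶ F.obj X))) (α : X ≅ Y)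
    (e : F.obj X ≅ F.obj Y) : ∃ i : X ≅ Y, F.map i.hom = e.hom := by
  have hbij {X₁ Y₁ : C} (α₁ : X ≅ X₁) (β₁ : X ≅ Y₁) :=
    F.map_bijective_of_iso α₁ β₁ hX
  obtain ⟨f, hf⟩ := (hbij (Iso.refl X) α).2 e.hom
  obtain ⟨g, hg⟩ := (hbij α (Iso.refl X)).2 e.inv
  refine ⟨⟨f, g, (hbij (Iso.refl X) (Iso.refl X)).1 ?_, (hbij α α).1 ?_⟩, hf⟩ <;>
    simp [hf, hg]

variable {G : Type*} [Mul G]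

def IsDescentDatum (ρ : G → C ⥤ C) (hmul : ∀ g h : G, ρ (g * h) = ρ h ⋙ ρ g) {X : C}
    (dat : ∀ g : G, X ≅ (ρ g).obj X) : Prop :=
  ∀ g h : G, (dat (g * h)).hom =
    (dat g).hom ≫ (ρ g).map (dat h).hom ≫ eqToHom (Functor.congr_obj (hmul g h) X).symm

theorem isDescentDatum_iff_of_map_hom_eq {ρC : G → C ⥤ C} {ρD : G → D ⥤ D}
    (hmulC : ∀ g h : G, ρC (g * h) = ρC h ⋙ ρC g)
    (hmulD : ∀ g h : G, ρD (g * h) = ρD h ⋙ ρD g)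
    {Φ : C ⥤ D} (hcomm : ∀ g : G, ρC g ⋙ Φ = Φ ⋙ ρD g) {X : C}
    (hinj : ∀ g : G, Function.Injective (Φ.map : (X ⟶ (ρC g).obj X) → _))
    (dat : ∀ g : G, X ≅ (ρC g).obj X) (dat' : ∀ g : G, Φ.obj X ≅ (ρD g).obj (Φ.obj X))
    (hdat : ∀ g : G,
      Φ.map (dat g).hom ≫ eqToHom (Functor.congr_obj (hcomm g) X) = (dat' g).hom) :
    IsDescentDatum ρD hmulD dat' ↔ IsDescentDatum ρC hmulC dat := by
  have hmap : ∀ g h : G,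
      Φ.map ((dat g).hom ≫ (ρC g).map (dat h).hom ≫
          eqToHom (Functor.congr_obj (hmulC g h) X).symm) ≫
        eqToHom (Functor.congr_obj (hcomm (g * h)) X) =
      (dat' g).hom ≫ (ρD g).map (dat' h).hom ≫
        eqToHom (Functor.congr_obj (hmulD g h) (Φ.obj X)).symm := by
    intro g h
    have hswap := Functor.congr_hom (hcomm g) (dat h).hom
    simp only [Functor.comp_map] at hswap
    simp [← hdat, hswap, eqToHom_map]
  refine forall₂_congr fun g h => ?_
  rw [← hdat, ← hmap, cancel_mono, (hinj _).eq_iff]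

end CategoryTheory

open CategoryTheory

/-- **Descent along a functor.**
Let `F : C → D` be a `K`-linear functor between `K`-linear abelian categories, `L/K` a
finite Galois extension with group `G`, and `F_L : C_L → D_L` the base-changed functor
(formalized as an `L`-linear functor `Φ` between `L`-linear categories carrying strict
semilinear `G`-actions `ρC`, `ρD`, with `Φ` strictly equivariant; `IndC`, `IndD` are
the induction functors, and Galois descent holds in both categories: descent data are
effective, and conversely objects in the essential image of induction carry descent
data).  Let `M ∈ C_L` with `M ≅ ᵍM` for all `g ∈ G` and `End_{C_L}(M) ≅ L`, and
suppose `End_{D_L}(F_L M) ≅ L`.  Then `M` descends to `C` iff `F_L M` descends to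
`D`. -/
theorem descent_along_functor
    (K L : Type*) [Field K] [Field L] [Algebra K L]
    (C D : Type*) [Category C] [Category D] [Preadditive C] [Preadditive D]
    [Linear L C] [Linear L D]
    (ρC : (L ≃ₐ[K] L) → C ⥤ C) (ρD : (L ≃ₐ[K] L) → D ⥤ D)
    (hmulC : ∀ g h : L ≃ₐ[K] L, ρC (g * h) = ρC h ⋙ ρC g)
    (hmulD : ∀ g h : L ≃ₐ[K] L, ρD (g * h) = ρD h ⋙ ρD g)
    (Φ : C ⥤ D) [Φ.Additive] [Φ.Linear L]
    (hcomm : ∀ g : L ≃ₐ[K] L, ρC g ⋙ Φ = Φ ⋙ ρD g)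
    (C₀ D₀ : Type*) [Category C₀] [Category D₀]
    (IndC : C₀ ⥤ C) (IndD : D₀ ⥤ D)
    (hdescC : ∀ X : C,
      (∃ N : C₀, Nonempty (IndC.obj N ≅ X)) ↔
      ∃ dat : ∀ g : L ≃ₐ[K] L, X ≅ (ρC g).obj X,
        ∀ g h : L ≃ₐ[K] L,
          (dat (g * h)).hom =
            (dat g).hom ≫ (ρC g).map (dat h).hom ≫
              eqToHom (show (ρC g).obj ((ρC h).obj X) = (ρC (g * h)).obj X by
                rw [hmulC g h]; rfl))
    (hdescD : ∀ X : D,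
      (∃ N : D₀, Nonempty (IndD.obj N ≅ X)) ↔
      ∃ dat : ∀ g : L ≃ₐ[K] L, X ≅ (ρD g).obj X,
        ∀ g h : L ≃ₐ[K] L,
          (dat (g * h)).hom =
            (dat g).hom ≫ (ρD g).map (dat h).hom ≫
              eqToHom (show (ρD g).obj ((ρD h).obj X) = (ρD (g * h)).obj X by
                rw [hmulD g h]; rfl))
    (M : C)
    (htwist : ∀ g : L ≃ₐ[K] L, Nonempty (M ≅ (ρC g).obj M))
    (hEndM : Function.Bijective (fun a : L => a • (𝟙 M)))
    (hEndFM : Function.Bijective (fun a : L => a • (𝟙 (Φ.obj M)))) :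
    (∃ N : C₀, Nonempty (IndC.obj N ≅ M)) ↔
      (∃ N : D₀, Nonempty (IndD.obj N ≅ Φ.obj M)) := by
  have hEnd := Φ.map_bijective_of_smul_id_surjective hEndM.surjective hEndFM
  have hinj (g : L ≃ₐ[K] L) :=
    (Φ.map_bijective_of_iso (Iso.refl M) (htwist g).some hEnd).injective
  rw [hdescC M, hdescD (Φ.obj M)]
  constructor
  · rintro ⟨dat, hdat⟩
    let dat' g := Φ.mapIso (dat g) ≪≫ eqToIso (Functor.congr_obj (hcomm g) M)
    exact ⟨dat', (isDescentDatum_iff_of_map_hom_eq hmulC hmulD hcomm hinj dat dat'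
      fun _ => rfl).2 hdat⟩
  · rintro ⟨dat', hdat'⟩
    choose dat hdat using fun g => Φ.exists_iso_map_hom_eq hEnd (htwist g).some
      (dat' g ≪≫ eqToIso (Functor.congr_obj (hcomm g) M).symm)
    refine ⟨dat, (isDescentDatum_iff_of_map_hom_eq hmulC hmulD hcomm hinj dat dat' ?_).1 hdat'⟩
    intro g
    simp [hdat]
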